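/- arXiv:2602.05657 — 3 statements merged into one kernel-verified Lean document; each statement's English description precedes it below -/
import Mathlib

section
/- Let f: ℝ^d → ℝ be L-smooth, α > 0, γ > 0, and let x ∈ ℝ^d and g̃ ∈ ℝ^d with ‖g̃‖ ≤ γ. Write g̃ - ∇f(x) = u + b for vectors u, b ∈ ℝ^d with ‖b‖ ≤ 4σ^p γ^{1-p}. Then for x⁺ = x - αg̃: f(x⁺) ≤ f(x) - (α/2)‖∇f(x)‖² - α⟨∇f(x), u⟩ + 8ασ^{2p}γ^{2(1-p)} + (α²γ²L)/2. -/
/-! The smoothness inequality between `x` and `x - α • g̃` bounds the step by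
`-α ⟪∇f(x), g̃⟫ + (L/2) α² ‖g̃‖²`. Splitting `g̃ = ∇f(x) + u + b` produces `-α ‖∇f(x)‖²`, the
noise term `-α ⟪∇f(x), u⟫` and the bias term `-α ⟪∇f(x), b⟫`; Young's inequality trades the
latter for half of `α ‖∇f(x)‖²` plus `α ‖b‖² / 2`, and `‖b‖² ≤ 16 σ^{2p} γ^{2(1-p)}`. -/

open RealInnerProductSpace

section

variable {E : Type*} [NormedAddCommGroup E] [InnerProductSpace ℝ E]

theorem le_sub_smul_of_smooth {f : E → ℝ} {f' : E → E} {L : ℝ}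
    (hsmooth : ∀ y y', f y' ≤ f y + ⟪f' y, y' - y⟫ + L / 2 * ‖y' - y‖ ^ 2) (x g : E) (α : ℝ) :
    f (x - α • g) ≤ f x - α * ⟪f' x, g⟫ + α ^ 2 * L / 2 * ‖g‖ ^ 2 := by
  have step := hsmooth x (x - α • g)
  rw [sub_sub_cancel_left, inner_neg_right, real_inner_smul_right, norm_neg, norm_smul,
    mul_pow, Real.norm_eq_abs, sq_abs] at step
  linarith

theorem neg_real_inner_le_half_sq_add_half_sq (a b : E) :
    -⟪a, b⟫ ≤ ‖a‖ ^ 2 / 2 + ‖b‖ ^ 2 / 2 := by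
  nlinarith [norm_add_sq_real a b, sq_nonneg ‖a + b‖]

theorem real_inner_ge_of_sub_eq_add {a g u b : E} (h : g - a = u + b) :
    ‖a‖ ^ 2 / 2 + ⟪a, u⟫ - ‖b‖ ^ 2 / 2 ≤ ⟪a, g⟫ := by
  have hg : g = a + u + b := by rw [add_assoc, ← h, add_sub_cancel]
  rw [hg, inner_add_right, inner_add_right, real_inner_self_eq_norm_sq]
  linarith [neg_real_inner_le_half_sq_add_half_sq a b]

end

theorem sq_le_of_le_mul_rpow {β σ γ p : ℝ} (hσ : 0 ≤ σ) (hγ : 0 ≤ γ) (hβ : 0 ≤ β)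
    (h : β ≤ 4 * σ ^ p * γ ^ (1 - p)) :
    β ^ 2 ≤ 16 * σ ^ (2 * p) * γ ^ (2 * (1 - p)) := by
  calc β ^ 2 ≤ (4 * σ ^ p * γ ^ (1 - p)) ^ 2 := pow_le_pow_left₀ hβ h 2
    _ = 16 * σ ^ (2 * p) * γ ^ (2 * (1 - p)) := by
      rw [mul_pow, mul_pow, ← Real.rpow_mul_natCast hσ, ← Real.rpow_mul_natCast hγ]
      norm_num [mul_comm]

theorem clipped_sgd_descent_inequality_general
    {d : ℕ} (f : EuclideanSpace ℝ (Fin d) → ℝ)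
    (f' : EuclideanSpace ℝ (Fin d) → EuclideanSpace ℝ (Fin d))
    (L : ℝ) (hL : 0 < L)
    (hsmooth : ∀ y y', f y' ≤ f y + (inner ℝ (f' y) (y' - y) : ℝ) + L / 2 * ‖y' - y‖ ^ 2)
    (α γ σ p : ℝ) (hα : 0 < α) (hγ : 0 < γ) (hσ : 0 < σ)
    (x gc u b : EuclideanSpace ℝ (Fin d))
    (hg : ‖gc‖ ≤ γ)
    (hdecomp : gc - f' x = u + b)
    (hb : ‖b‖ ≤ 4 * σ ^ p * γ ^ (1 - p)) :
    f (x - α • gc) ≤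
      f x - α / 2 * ‖f' x‖ ^ 2 - α * (inner ℝ (f' x) u : ℝ)
        + 8 * α * σ ^ (2 * p) * γ ^ (2 * (1 - p)) + α ^ 2 * γ ^ 2 * L / 2 := by
  have descent := le_sub_smul_of_smooth hsmooth x gc α
  have alignment := real_inner_ge_of_sub_eq_add hdecomp
  have bias := sq_le_of_le_mul_rpow hσ.le hγ.le (norm_nonneg b) hb
  have clip : ‖gc‖ ^ 2 ≤ γ ^ 2 := pow_le_pow_left₀ (norm_nonneg gc) hg 2
  have hαL : 0 ≤ α ^ 2 * L / 2 := by positivity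
  linarith [mul_le_mul_of_nonneg_left alignment hα.le, mul_le_mul_of_nonneg_left bias hα.le,
    mul_le_mul_of_nonneg_left clip hαL]

theorem clipped_sgd_descent_inequality
    {d : ℕ} (f : EuclideanSpace ℝ (Fin d) → ℝ)
    (f' : EuclideanSpace ℝ (Fin d) → EuclideanSpace ℝ (Fin d))
    (hf : ∀ y, HasGradientAt f (f' y) y)
    (L : ℝ) (hL : 0 < L)
    (hsmooth : ∀ y y', f y' ≤ f y + (inner ℝ (f' y) (y' - y) : ℝ) + L / 2 * ‖y' - y‖ ^ 2)
    (α γ σ p : ℝ) (hα : 0 < α) (hγ : 0 < γ) (hσ : 0 < σ) (hp : 1 < p) (hp2 : p ≤ 2)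
    (x gc u b : EuclideanSpace ℝ (Fin d))
    (hg : ‖gc‖ ≤ γ)
    (hdecomp : gc - f' x = u + b)
    (hb : ‖b‖ ≤ 4 * σ ^ p * γ ^ (1 - p)) :
    f (x - α • gc) ≤
      f x - α / 2 * ‖f' x‖ ^ 2 - α * (inner ℝ (f' x) u : ℝ)
        + 8 * α * σ ^ (2 * p) * γ ^ (2 * (1 - p)) + α ^ 2 * γ ^ 2 * L / 2 :=
  clipped_sgd_descent_inequality_general f f' L hL hsmooth α γ σ p hα hγ hσ x gc u b hg hdecomp hb
end

section
/- Let x₁ ∈ ℝ^d with 0 < ‖x₁‖ ≤ G and let (z_t)_{t≥1} be i.i.d. random vectors each equal to x₁ with probability 1/2 and -x₁ with probability 1/2. Define the SGD iterates by x_{t+1} = x_t - α_t(∇f(x_t) + z_t) with α_t = 1/(2√(t+1)) and f the Huber cost with threshold G. Then for every t ≥ 1, P(x_t = x_{t-1} = ⋯ = x₁) = 2^{-t+1}. -/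
/-!
On the ball `‖x‖ ≤ G` the Huber gradient is the identity, so an SGD step from `x₁` with noise
`z` and a nonzero step size returns to `x₁` exactly when `z = -x₁`. Hence the iterates stay at
`x₁` up to time `t` iff `z₁ = ⋯ = z_{t-1} = -x₁`, an event of probability `2^{-(t-1)}` by
independence.
-/

open MeasureTheory

/-- Gradient of the Huber cost with threshold `G`. -/
noncomputable def huberGrad {d : ℕ} (G : ℝ) (x : EuclideanSpace ℝ (Fin d)) :
    EuclideanSpace ℝ (Fin d) :=
  if ‖x‖ ≤ G then x else (G / ‖x‖) • x

theorem huberGrad_of_norm_le {d : ℕ} {G : ℝ} {x : EuclideanSpace ℝ (Fin d)} (hx : ‖x‖ ≤ G) :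
    huberGrad G x = x :=
  if_pos hx

section SGDStep

variable {𝕜 E : Type*} [DivisionRing 𝕜] [AddCommGroup E] [Module 𝕜 E]

theorem sub_smul_add_eq_self_iff {c : 𝕜} (hc : c ≠ 0) (a g z : E) :
    a - c • (g + z) = a ↔ z = -g := by
  rw [sub_eq_self, smul_eq_zero_iff_right hc, add_eq_zero_iff_neg_eq, eq_comm]

theorem iterates_eq_start_iff {g : E → E} {α : ℕ → 𝕜} (hα : ∀ s, 1 ≤ s → α s ≠ 0)
    {x z : ℕ → E} {a : E} (hx₁ : x 1 = a)
    (hrec : ∀ s, 1 ≤ s → x (s + 1) = x s - α s • (g (x s) + z s)) (t : ℕ) :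
    (∀ k, 1 ≤ k → k ≤ t → x k = a) ↔ ∀ s ∈ Finset.Icc 1 (t - 1), z s = -g a := by
  simp only [Finset.mem_Icc]
  constructor
  · rintro hconst s ⟨hs, hst⟩
    have hstep := hrec s hs
    rw [hconst s hs (by omega), hconst (s + 1) (by omega) (by omega), eq_comm] at hstep
    exact (sub_smul_add_eq_self_iff (hα s hs) a _ _).mp hstep
  · intro hz k hk hkt
    induction k, hk using Nat.le_induction with
    | base => exact hx₁
    | succ s hs ih =>
      rw [hrec s hs, ih (by omega)]
      exact (sub_smul_add_eq_self_iff (hα s hs) a _ _).mpr (hz s ⟨hs, by omega⟩)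

end SGDStep

theorem ProbabilityTheory.iIndepFun.measure_biInter_preimage_eq_pow {Ω ι β : Type*}
    [MeasurableSpace Ω] [MeasurableSpace β] {μ : Measure Ω} {z : ι → Ω → β} (hz : iIndepFun z μ)
    {A : Set β} (hA : MeasurableSet A) {S : Finset ι} {p : ENNReal}
    (hp : ∀ s ∈ S, μ (z s ⁻¹' A) = p) :
    μ (⋂ s ∈ S, z s ⁻¹' A) = p ^ S.card := by
  rw [hz.measure_inter_preimage_eq_mul S (sets := fun _ => A) (fun _ _ => hA),
    Finset.prod_congr rfl hp, Finset.prod_const]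

theorem sgd_lower_bound_event_probability_general
    {Ω : Type*} [MeasurableSpace Ω] {μ : Measure Ω}
    {d : ℕ} (G : ℝ)
    (x₁ : EuclideanSpace ℝ (Fin d)) (hx₁G : ‖x₁‖ ≤ G)
    (z : ℕ → Ω → EuclideanSpace ℝ (Fin d))
    (hindep : ProbabilityTheory.iIndepFun z μ)
    (hdist : ∀ t, 1 ≤ t →
      μ {ω | z t ω = x₁} = 1 / 2 ∧ μ {ω | z t ω = -x₁} = 1 / 2)
    (X : ℕ → Ω → EuclideanSpace ℝ (Fin d))
    (hX1 : ∀ ω, X 1 ω = x₁)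
    (hrec : ∀ t, 1 ≤ t → ∀ ω,
      X (t + 1) ω = X t ω - (1 / (2 * Real.sqrt (t + 1))) • (huberGrad G (X t ω) + z t ω)) :
    ∀ t, 1 ≤ t →
      μ {ω | ∀ k, 1 ≤ k → k ≤ t → X k ω = x₁} = (1 / 2 : ENNReal) ^ (t - 1) := by
  intro t _
  have hα : ∀ s : ℕ, 1 ≤ s → 1 / (2 * Real.sqrt (s + 1)) ≠ 0 := fun s _ => by positivity
  have hevent : {ω | ∀ k, 1 ≤ k → k ≤ t → X k ω = x₁} =
      ⋂ s ∈ Finset.Icc 1 (t - 1), z s ⁻¹' {-x₁} := by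
    ext ω
    simpa [huberGrad_of_norm_le hx₁G] using
      iterates_eq_start_iff (g := huberGrad G) (x := (X · ω)) (z := (z · ω)) hα (hX1 ω)
        (fun s hs => hrec s hs ω) t
  rw [hevent, hindep.measure_biInter_preimage_eq_pow (measurableSet_singleton _)
    (fun s hs => (hdist s (Finset.mem_Icc.mp hs).1).2), Nat.card_Icc, Nat.add_sub_cancel]

theorem sgd_lower_bound_event_probability
    {Ω : Type*} [MeasurableSpace Ω] {μ : Measure Ω} [IsProbabilityMeasure μ]
    {d : ℕ} (G : ℝ) (hG : 0 < G)
    (x₁ : EuclideanSpace ℝ (Fin d)) (hx₁ : 0 < ‖x₁‖) (hx₁G : ‖x₁‖ ≤ G)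
    (z : ℕ → Ω → EuclideanSpace ℝ (Fin d))
    (hzmeas : ∀ t, Measurable (z t))
    (hindep : ProbabilityTheory.iIndepFun z μ)
    (hdist : ∀ t, 1 ≤ t →
      μ {ω | z t ω = x₁} = 1 / 2 ∧ μ {ω | z t ω = -x₁} = 1 / 2)
    (X : ℕ → Ω → EuclideanSpace ℝ (Fin d))
    (hX1 : ∀ ω, X 1 ω = x₁)
    (hrec : ∀ t, 1 ≤ t → ∀ ω,
      X (t + 1) ω = X t ω - (1 / (2 * Real.sqrt (t + 1))) • (huberGrad G (X t ω) + z t ω)) :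
    ∀ t, 1 ≤ t →
      μ {ω | ∀ k, 1 ≤ k → k ≤ t → X k ω = x₁} = (1 / 2 : ENNReal) ^ (t - 1) :=
  sgd_lower_bound_event_probability_general G x₁ hx₁G z hindep hdist X hX1 hrec
end

section
/- Let G > 0 and f be the Huber cost with threshold G. Consider clipped SGD iterates x_{t+1} = x_t - α_t·min{1, γ_t/‖g_t‖}·g_t with g_t = ∇f(x_t) + z_t, step-size α_t = 1/(2√(t+1)), clipping threshold γ_t ≥ 2G, deterministic initialization 0 < ‖x₁‖ ≤ G, and noise satisfying ‖z_t‖ ≤ ‖x₁‖ always. Then ‖x_t‖ ≤ G for all t ≥ 1, and consequently ‖g_t‖ ≤ 2G ≤ γ_t, so the clipping is never active and clipped SGD coincides with vanilla SGD. -/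
theorem clipped_sgd_reverts_to_sgd
    {d : ℕ} (G : ℝ) (hG : 0 < G)
    (x₁ : EuclideanSpace ℝ (Fin d)) (hx₁ : 0 < ‖x₁‖) (hx₁G : ‖x₁‖ ≤ G)
    (z : ℕ → EuclideanSpace ℝ (Fin d)) (hz : ∀ t, ‖z t‖ ≤ ‖x₁‖)
    (γ : ℕ → ℝ) (hγ : ∀ t, 1 ≤ t → 2 * G ≤ γ t)
    (g : ℕ → EuclideanSpace ℝ (Fin d))
    (X : ℕ → EuclideanSpace ℝ (Fin d))
    (hX1 : X 1 = x₁)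
    (hg : ∀ t, 1 ≤ t → g t = huberGrad G (X t) + z t)
    (hrec : ∀ t, 1 ≤ t →
      X (t + 1) = X t - (1 / (2 * Real.sqrt (t + 1))) • (min 1 (γ t / ‖g t‖) • g t)) :
    ∀ t, 1 ≤ t →
      ‖X t‖ ≤ G ∧ ‖g t‖ ≤ 2 * G ∧ ‖g t‖ ≤ γ t ∧
        X (t + 1) = X t - (1 / (2 * Real.sqrt (t + 1))) • g t := by
  -- auxiliary facts, conditionally on ‖X n‖ ≤ G
  have hgnE : ∀ n, 1 ≤ n → ‖X n‖ ≤ G → g n = X n + z n := by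
    intro n hn h
    rw [hg n hn, huberGrad, if_pos h]
  have hgnorm : ∀ n, 1 ≤ n → ‖X n‖ ≤ G → ‖g n‖ ≤ 2 * G := by
    intro n hn h
    rw [hgnE n hn h]
    calc ‖X n + z n‖ ≤ ‖X n‖ + ‖z n‖ := norm_add_le _ _
      _ ≤ G + G := add_le_add h ((hz n).trans hx₁G)
      _ = 2 * G := by ring
  have hmin : ∀ n, 1 ≤ n → ‖X n‖ ≤ G → min (1:ℝ) (γ n / ‖g n‖) • g n = g n := by
    intro n hn h
    by_cases h0 : g n = 0
    · simp [h0]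
    · have hpos : 0 < ‖g n‖ := norm_pos_iff.mpr h0
      have h1 : (1:ℝ) ≤ γ n / ‖g n‖ := by
        rw [le_div_iff₀ hpos, one_mul]
        exact (hgnorm n hn h).trans (hγ n hn)
      rw [min_eq_left h1, one_smul]
  have key : ∀ t, 1 ≤ t → ‖X t‖ ≤ G := by
    intro t ht
    induction t, ht using Nat.le_induction with
    | base => rw [hX1]; exact hx₁G
    | succ n hn ih =>
      set α : ℝ := 1 / (2 * Real.sqrt (n + 1)) with hα
      have hs1 : (1:ℝ) ≤ Real.sqrt (n + 1) := by
        have h : (1:ℝ) ≤ (n:ℝ) + 1 := by have := Nat.cast_nonneg (α := ℝ) n; linarith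
        nlinarith [Real.sq_sqrt (zero_le_one.trans h), Real.sqrt_nonneg ((n:ℝ) + 1)]
      have hαpos : 0 < α := by positivity
      have hαle : α ≤ 1 / 2 := by
        rw [hα, div_le_div_iff₀ (by positivity) (by norm_num)]
        nlinarith
      have hXrec : X (n + 1) = (1 - α) • X n - α • z n := by
        rw [hrec n hn, hmin n hn ih, hgnE n hn ih, smul_add, sub_smul, one_smul]
        abel
      rw [hXrec]
      calc ‖(1 - α) • X n - α • z n‖ ≤ ‖(1 - α) • X n‖ + ‖α • z n‖ := norm_sub_le _ _
        _ = |1 - α| * ‖X n‖ + |α| * ‖z n‖ := by rw [norm_smul, norm_smul]; rfl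
        _ = (1 - α) * ‖X n‖ + α * ‖z n‖ := by
            rw [abs_of_nonneg (by linarith), abs_of_nonneg hαpos.le]
        _ ≤ (1 - α) * G + α * G := by
            apply add_le_add
            · exact mul_le_mul_of_nonneg_left ih (by linarith)
            · exact mul_le_mul_of_nonneg_left ((hz n).trans hx₁G) hαpos.le
        _ = G := by ring
  intro t ht
  have h1 := key t ht
  have h2 := hgnorm t ht h1
  refine ⟨h1, h2, h2.trans (hγ t ht), ?_⟩
  rw [hrec t ht, hmin t ht h1]
end
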